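/- For every σ with 1 < σ < 4 there exists ε_σ > 0 such that for all ε with 0 < ε < ε_σ, taking ξ = ε^{−σ}, the product G(ξ,ε) := ∏_k (ε·ξ·k^{−3/2}), taken over all integers k with 1 ≤ k, ξ·ε² ≤ k and k ≤ (εξ)^{2/3}, satisfies G(ξ,ε) ≥ exp( 0.05·(εξ)^{2/3} ) = exp( 0.05·ε^{2(1−σ)/3} ). -/
import Mathlib


open Real Finset

noncomputable section

/-- The predicted norm-inflation factor `G(ξ,ε) = ∏ εξ k^{−3/2}`, the product ranging
over the integers `k` with `1 ≤ k`, `ξε² ≤ k` and `k ≤ (εξ)^{2/3}`. -/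
def resonanceProduct (ξ ε : ℝ) : ℝ :=
  ∏ k ∈ Finset.Icc (max 1 ⌈ξ * ε ^ 2⌉₊) ⌊(ε * ξ) ^ ((2 : ℝ) / 3)⌋₊,
    ε * ξ * (k : ℝ) ^ (-(3 / 2) : ℝ)

lemma exp_one_le_two_rpow : Real.exp 1 ≤ (2 : ℝ) ^ ((3 : ℝ) / 2) := by
  have h8 : (2 : ℝ) ^ ((3 : ℝ) / 2) = Real.sqrt 8 := by
    rw [Real.sqrt_eq_rpow]
    rw [show ((3:ℝ)/2) = 3 * (1/2) by ring, Real.rpow_mul (by norm_num : (0:ℝ) ≤ 2)]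
    norm_num
  rw [h8]
  nlinarith [Real.exp_one_lt_d9, Real.sqrt_nonneg (8:ℝ),
    Real.sq_sqrt (by norm_num : (0:ℝ) ≤ 8), Real.exp_pos 1]

/-- Lemma: the upper bound is attained: for every `1 < σ < 4` there
is `ε_σ > 0` such that for all `0 < ε < ε_σ`, with `ξ = ε^{−σ}`,
`G(ξ,ε) ≥ exp(0.05 (εξ)^{2/3})`. -/
theorem statement15 (σ : ℝ) (hσ1 : 1 < σ) (hσ4 : σ < 4) :
    ∃ εσ : ℝ, 0 < εσ ∧
      ∀ ε : ℝ, 0 < ε → ε < εσ →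
        Real.exp (0.05 * (ε * ε ^ (-σ)) ^ ((2 : ℝ) / 3)) ≤
          resonanceProduct (ε ^ (-σ)) ε := by
  set s : ℝ := (4 - σ) / 3 with hs_def
  set t : ℝ := 2 * (σ - 1) / 3 with ht_def
  have hs : 0 < s := by rw [hs_def]; linarith
  have ht : 0 < t := by rw [ht_def]; linarith
  refine ⟨min ((0.2 : ℝ) ^ (1 / s)) ((10 : ℝ) ^ (-(1 / t))), by positivity, ?_⟩
  intro ε hε hεlt
  rw [resonanceProduct]
  -- basic abbreviations
  set A : ℝ := ε * ε ^ (-σ) with hA_def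
  set B : ℝ := A ^ ((2 : ℝ) / 3) with hB_def
  have hA_eq : A = ε ^ (1 - σ) := by
    rw [hA_def]
    nth_rewrite 1 [← Real.rpow_one ε]
    rw [← Real.rpow_add hε]; ring_nf
  have hApos : 0 < A := by rw [hA_eq]; exact Real.rpow_pos_of_pos hε _
  have hBpos : 0 < B := Real.rpow_pos_of_pos hApos _
  have hB_eq : B = ε ^ (-t) := by
    rw [hB_def, hA_eq, ← Real.rpow_mul hε.le]
    congr 1
    rw [ht_def]; ring
  -- A = B^{3/2}
  have hAB : A = B ^ ((3 : ℝ) / 2) := by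
    rw [hB_def, ← Real.rpow_mul hApos.le]
    norm_num
  -- x := ξ ε² = ε^{2-σ}
  have hx_eq : ε ^ (-σ) * ε ^ 2 = ε ^ (2 - σ) := by
    have h2 : (ε : ℝ) ^ (2 : ℕ) = ε ^ ((2 : ℝ)) := by
      rw [← Real.rpow_natCast ε 2]; norm_num
    rw [h2, ← Real.rpow_add hε]; ring_nf
  set x : ℝ := ε ^ (2 - σ) with hx_def
  have hx0 : 0 ≤ x := (Real.rpow_pos_of_pos hε _).le
  have hxB : x = B * ε ^ s := by
    rw [hx_def, hB_eq, ← Real.rpow_add hε]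
    congr 1
    rw [hs_def, ht_def]; ring
  -- bounds from smallness of ε
  have hε1 : ε ^ s < 0.2 := by
    have h1 : ε < (0.2 : ℝ) ^ (1 / s) := lt_of_lt_of_le hεlt (min_le_left _ _)
    calc ε ^ s < ((0.2 : ℝ) ^ (1 / s)) ^ s := Real.rpow_lt_rpow hε.le h1 hs
      _ = 0.2 := by
          rw [← Real.rpow_mul (by norm_num : (0:ℝ) ≤ 0.2), one_div_mul_cancel hs.ne',
            Real.rpow_one]
  have hB10 : 10 < B := by
    have h1 : ε < (10 : ℝ) ^ (-(1 / t)) := lt_of_lt_of_le hεlt (min_le_right _ _)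
    have h2 : ε ^ t < (10 : ℝ)⁻¹ := by
      calc ε ^ t < ((10 : ℝ) ^ (-(1 / t))) ^ t := Real.rpow_lt_rpow hε.le h1 ht
        _ = (10 : ℝ)⁻¹ := by
            rw [← Real.rpow_mul (by norm_num : (0:ℝ) ≤ 10)]
            rw [show -(1/t) * t = -1 by field_simp]
            rw [Real.rpow_neg_one]
    have h3 : 0 < ε ^ t := Real.rpow_pos_of_pos hε _
    rw [hB_eq, Real.rpow_neg hε.le, inv_eq_one_div, lt_div_iff₀ h3]
    nlinarith
  have hxB2 : x < 0.2 * B := by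
    rw [hxB]
    nlinarith
  -- the index bounds
  set m : ℕ := max 1 ⌈ε ^ (-σ) * ε ^ 2⌉₊ with hm_def
  set N : ℕ := ⌊(ε * ε ^ (-σ)) ^ ((2 : ℝ) / 3)⌋₊ with hN_def
  set M : ℕ := ⌊B / 2⌋₊ with hM_def
  have hNB : (N : ℝ) ≤ B := by
    rw [hN_def]; exact Nat.floor_le hBpos.le
  have hMB : (M : ℝ) ≤ B / 2 := Nat.floor_le (by linarith)
  have hMB' : B / 2 - 1 < (M : ℝ) := by
    have := Nat.lt_floor_add_one (B / 2)
    rw [← hM_def] at this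
    linarith
  have hMN : M ≤ N := by
    rw [hM_def, hN_def, ← hB_def]
    exact Nat.floor_le_floor (by linarith)
  have hmx : (m : ℝ) ≤ x + 1 := by
    rw [hm_def]
    push_cast [Nat.cast_max]
    apply max_le (by linarith)
    rw [hx_eq]
    exact (Nat.ceil_lt_add_one hx0).le
  have hmM : m ≤ M := by
    have h : (m : ℝ) ≤ (M : ℝ) := by nlinarith
    exact_mod_cast h
  have hm1 : 1 ≤ m := le_max_left _ _
  -- factor bounds
  have key1 : ∀ k ∈ Finset.Icc m N, (1 : ℝ) ≤ A * (k : ℝ) ^ (-(3 / 2) : ℝ) := by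
    intro k hk
    rw [Finset.mem_Icc] at hk
    have hk1 : (1 : ℝ) ≤ (k : ℝ) := by exact_mod_cast le_trans hm1 hk.1
    have hkpos : (0 : ℝ) < (k : ℝ) := by linarith
    have hkB : (k : ℝ) ≤ B := le_trans (by exact_mod_cast hk.2) hNB
    have h32 : (k : ℝ) ^ ((3 : ℝ) / 2) ≤ A := by
      rw [hAB]
      exact Real.rpow_le_rpow hkpos.le hkB (by norm_num)
    have hkp : 0 < (k : ℝ) ^ ((3 : ℝ) / 2) := Real.rpow_pos_of_pos hkpos _
    rw [show (-(3/2) : ℝ) = -((3:ℝ)/2) by norm_num, Real.rpow_neg hkpos.le,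
      ← div_eq_mul_inv]
    rw [one_le_div hkp]
    exact h32
  have key2 : ∀ k ∈ Finset.Icc m M, Real.exp 1 ≤ A * (k : ℝ) ^ (-(3 / 2) : ℝ) := by
    intro k hk
    rw [Finset.mem_Icc] at hk
    have hk1 : (1 : ℝ) ≤ (k : ℝ) := by exact_mod_cast le_trans hm1 hk.1
    have hkpos : (0 : ℝ) < (k : ℝ) := by linarith
    have hkM : (k : ℝ) ≤ B / 2 := le_trans (by exact_mod_cast hk.2) hMB
    set c : ℝ := (2 : ℝ) ^ ((3 : ℝ) / 2) with hc_def
    have hcpos : 0 < c := Real.rpow_pos_of_pos (by norm_num) _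
    have h32 : (k : ℝ) ^ ((3 : ℝ) / 2) ≤ A / c := by
      have h1 : (k : ℝ) ^ ((3 : ℝ) / 2) ≤ (B / 2) ^ ((3 : ℝ) / 2) :=
        Real.rpow_le_rpow hkpos.le hkM (by norm_num)
      have h2 : (B / 2) ^ ((3 : ℝ) / 2) = A / c := by
        rw [Real.div_rpow hBpos.le (by norm_num : (0:ℝ) ≤ 2), ← hAB, hc_def]
      linarith [h1, h2.le]
    have hkp : 0 < (k : ℝ) ^ ((3 : ℝ) / 2) := Real.rpow_pos_of_pos hkpos _
    have hAc : 0 < A / c := by positivity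
    calc Real.exp 1 ≤ c := exp_one_le_two_rpow
      _ = A / (A / c) := by field_simp
      _ ≤ A / ((k : ℝ) ^ ((3 : ℝ) / 2)) := by
          apply div_le_div_of_nonneg_left hApos.le hkp h32
      _ = A * (k : ℝ) ^ (-(3 / 2) : ℝ) := by
          rw [show (-(3/2) : ℝ) = -((3:ℝ)/2) by norm_num, Real.rpow_neg hkpos.le,
            div_eq_mul_inv]
  -- count of small indices
  have hcard : (0.05 : ℝ) * B ≤ ((Finset.Icc m M).card : ℝ) := by
    rw [Nat.card_Icc]
    rw [Nat.cast_sub (le_trans hmM (Nat.le_succ M))]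
    push_cast
    linarith
  -- main chain
  have hprod1 : Real.exp (0.05 * B) ≤ ∏ k ∈ Finset.Icc m M, (A * (k : ℝ) ^ (-(3 / 2) : ℝ)) := by
    calc Real.exp (0.05 * B) ≤ Real.exp ((Finset.Icc m M).card : ℝ) :=
          Real.exp_le_exp.mpr hcard
      _ = Real.exp 1 ^ (Finset.Icc m M).card := by rw [Real.exp_one_pow]
      _ = ∏ _k ∈ Finset.Icc m M, Real.exp 1 := (Finset.prod_const _).symm
      _ ≤ ∏ k ∈ Finset.Icc m M, (A * (k : ℝ) ^ (-(3 / 2) : ℝ)) :=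
          Finset.prod_le_prod (fun k _ => (Real.exp_pos 1).le) key2
  have hsplit : Finset.Icc m N = Finset.Icc m M ∪ Finset.Ioc M N := by
    ext k
    simp only [Finset.mem_Icc, Finset.mem_union, Finset.mem_Ioc]
    omega
  have hdisj : Disjoint (Finset.Icc m M) (Finset.Ioc M N) := by
    rw [Finset.disjoint_left]
    intro k hk1 hk2
    rw [Finset.mem_Icc] at hk1
    rw [Finset.mem_Ioc] at hk2
    omega
  have hrest : (1 : ℝ) ≤ ∏ k ∈ Finset.Ioc M N, (A * (k : ℝ) ^ (-(3 / 2) : ℝ)) := by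
    have h1 : ∀ k ∈ Finset.Ioc M N, (1 : ℝ) ≤ A * (k : ℝ) ^ (-(3 / 2) : ℝ) := by
      intro k hk
      apply key1
      rw [Finset.mem_Ioc] at hk
      rw [Finset.mem_Icc]
      exact ⟨le_trans hmM hk.1.le, hk.2⟩
    calc (1 : ℝ) = ∏ _k ∈ Finset.Ioc M N, (1 : ℝ) := (Finset.prod_const_one).symm
      _ ≤ _ := Finset.prod_le_prod (fun k _ => zero_le_one) h1
  have hP1pos : (0 : ℝ) ≤ ∏ k ∈ Finset.Icc m M, (A * (k : ℝ) ^ (-(3 / 2) : ℝ)) :=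
    le_trans (Real.exp_pos _).le hprod1
  calc Real.exp (0.05 * B)
      ≤ ∏ k ∈ Finset.Icc m M, (A * (k : ℝ) ^ (-(3 / 2) : ℝ)) := hprod1
    _ ≤ ∏ k ∈ Finset.Icc m N, (A * (k : ℝ) ^ (-(3 / 2) : ℝ)) := by
        rw [hsplit, Finset.prod_union hdisj]
        exact le_mul_of_one_le_right hP1pos hrest

end
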